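/- arXiv:2506.04110 — 6 statements merged into one kernel-verified Lean document; each statement's English description precedes it below -/
import Mathlib

section
/- For every irrational real number α, the infimum over positive integers q of q · |q|₂ · ‖qα‖ is strictly positive if and only if sup_{k≥0} M(2^k α) is finite. -/
/-! Writing `q = 2^k t` with `t` odd gives `q |q|₂ ‖qα‖ = t ‖t (2^k α)‖`. If every partial quotient
of `β = 2^k α` is at most `N`, the best approximation property of the convergents gives
`t ‖tβ‖ ≥ 1/(N+2)` for all `t ≥ 1`. Conversely, a convergent denominator `q_n` of `β` satisfies
`q_n ‖q_n β‖ < 1/a_{n+1}`, and `q = 2^k q_n` has `|q|₂ ≤ 2^{-k}`, so a positive infimum bounds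
all the `a_{n+1}(2^k α)`. -/

open Filter

/-- Partial quotients of the continued fraction expansion: `cfA α n` is `a_n(α)`. -/
noncomputable def cfA : ℝ → ℕ → ℤ
  | α, 0 => ⌊α⌋
  | α, n + 1 => cfA (Int.fract α)⁻¹ n

/-- `M(α) = sup_{n ≥ 1} a_n(α)` as an element of `ℕ∞`. -/
noncomputable def Mq (α : ℝ) : ℕ∞ := ⨆ n : ℕ, ((cfA α (n + 1)).toNat : ℕ∞)

/-- `B(α) = limsup_{n → ∞} a_n(α)` as an element of `ℕ∞`. -/
noncomputable def Bq (α : ℝ) : ℕ∞ := limsup (fun n => ((cfA α n).toNat : ℕ∞)) atTop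

/-- Distance from a real number to the nearest integer. -/
noncomputable def nearestDist (x : ℝ) : ℝ := |x - round x|

/-- Complete quotients of the continued fraction expansion. -/
noncomputable def cq (α : ℝ) : ℕ → ℝ
  | 0 => α
  | n + 1 => (Int.fract (cq α n))⁻¹

/-- Shifted convergent numerators: `cfP α (n+1) = p_n`, `cfP α 0 = p_{-1} = 1`. -/
noncomputable def cfP (α : ℝ) : ℕ → ℤ
  | 0 => 1
  | 1 => ⌊α⌋
  | n + 2 => cfA α (n + 1) * cfP α (n + 1) + cfP α n

/-- Shifted convergent denominators: `cfQ α (n+1) = q_n`, `cfQ α 0 = q_{-1} = 0`. -/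
noncomputable def cfQ (α : ℝ) : ℕ → ℤ
  | 0 => 0
  | 1 => 1
  | n + 2 => cfA α (n + 1) * cfQ α (n + 1) + cfQ α n

/-- Two reals are equivalent if related by an integer Möbius map of determinant `±1`. -/
def CfEquiv (x y : ℝ) : Prop :=
  ∃ a b c d : ℤ, (a * d - b * c = 1 ∨ a * d - b * c = -1) ∧
    y = ((a : ℝ) * x + b) / ((c : ℝ) * x + d)

section CompleteQuotients

variable {α : ℝ}

lemma cq_succ' (α : ℝ) (n : ℕ) : cq α (n + 1) = cq (Int.fract α)⁻¹ n := by
  induction n with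
  | zero => rfl
  | succ n ih => exact congrArg (fun x => (Int.fract x)⁻¹) ih

lemma cfA_eq_floor_cq (α : ℝ) (n : ℕ) : cfA α n = ⌊cq α n⌋ := by
  induction n generalizing α with
  | zero => rfl
  | succ n ih => rw [cq_succ', ← ih]; rfl

lemma cq_eq_cfA_add_inv_cq_succ (α : ℝ) (n : ℕ) :
    cq α n = cfA α n + (cq α (n + 1))⁻¹ := by
  rw [cfA_eq_floor_cq, cq, inv_inv, Int.floor_add_fract]

lemma irrational_cq (hα : Irrational α) (n : ℕ) : Irrational (cq α n) := by
  induction n with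
  | zero => exact hα
  | succ n ih => exact (ih.sub_intCast _).inv

lemma one_lt_cq_succ (hα : Irrational α) (n : ℕ) : 1 < cq α (n + 1) := by
  have hfract : 0 < Int.fract (cq α n) :=
    (Int.fract_nonneg _).lt_of_ne fun h => ((irrational_cq hα n).sub_intCast _).ne_zero h.symm
  exact one_lt_inv_iff₀.2 ⟨hfract, Int.fract_lt_one _⟩

lemma cfA_lt_cq (hα : Irrational α) (n : ℕ) : (cfA α n : ℝ) < cq α n := by
  rw [cq_eq_cfA_add_inv_cq_succ]
  exact lt_add_of_pos_right _ (inv_pos.2 (one_pos.trans (one_lt_cq_succ hα n)))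

lemma cq_lt_cfA_add_one (hα : Irrational α) (n : ℕ) : cq α n < cfA α n + 1 := by
  rw [cq_eq_cfA_add_inv_cq_succ]
  exact add_lt_add_right (inv_lt_one_of_one_lt₀ (one_lt_cq_succ hα n)) _

lemma one_le_cfA_succ (hα : Irrational α) (n : ℕ) : 1 ≤ cfA α (n + 1) := by
  rw [cfA_eq_floor_cq]
  exact Int.le_floor.2 (by exact_mod_cast (one_lt_cq_succ hα n).le)

end CompleteQuotients

section Convergents

variable {α : ℝ}

lemma cfQ_succ_succ (α : ℝ) (n : ℕ) :
    cfQ α (n + 2) = cfA α (n + 1) * cfQ α (n + 1) + cfQ α n := rfl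

lemma cfP_succ_succ (α : ℝ) (n : ℕ) :
    cfP α (n + 2) = cfA α (n + 1) * cfP α (n + 1) + cfP α n := rfl

lemma cfQ_nonneg_and_one_le_cfQ_succ (hα : Irrational α) (n : ℕ) :
    0 ≤ cfQ α n ∧ 1 ≤ cfQ α (n + 1) := by
  induction n with
  | zero => exact ⟨le_rfl, le_rfl⟩
  | succ n ih =>
    refine ⟨zero_le_one.trans ih.2, ?_⟩
    rw [cfQ_succ_succ]
    nlinarith [one_le_cfA_succ hα n]

lemma cfQ_nonneg (hα : Irrational α) (n : ℕ) : 0 ≤ cfQ α n :=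
  (cfQ_nonneg_and_one_le_cfQ_succ hα n).1

lemma one_le_cfQ_succ (hα : Irrational α) (n : ℕ) : 1 ≤ cfQ α (n + 1) :=
  (cfQ_nonneg_and_one_le_cfQ_succ hα n).2

lemma cfQ_le_cfQ_succ (hα : Irrational α) (n : ℕ) : cfQ α n ≤ cfQ α (n + 1) := by
  cases n with
  | zero => exact zero_le_one
  | succ n =>
    rw [cfQ_succ_succ]
    nlinarith [one_le_cfA_succ hα n, cfQ_nonneg hα n, one_le_cfQ_succ hα n]

lemma natCast_le_cfQ_succ (hα : Irrational α) (n : ℕ) : (n : ℤ) ≤ cfQ α (n + 1) := by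
  induction n with
  | zero => exact cfQ_nonneg hα 1
  | succ n ih =>
    rw [cfQ_succ_succ]
    cases n with
    | zero => simpa [cfQ] using one_le_cfA_succ hα 0
    | succ n =>
      push_cast at ih ⊢
      nlinarith [one_le_cfA_succ hα (n + 1), one_le_cfQ_succ hα n, one_le_cfQ_succ hα (n + 1)]

lemma cfP_succ_mul_cfQ_sub_cfP_mul_cfQ_succ (α : ℝ) (n : ℕ) :
    cfP α (n + 1) * cfQ α n - cfP α n * cfQ α (n + 1) = (-1) ^ (n + 1) := by
  induction n with
  | zero => simp [cfP, cfQ]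
  | succ n ih =>
    rw [cfP_succ_succ, cfQ_succ_succ]
    linear_combination (-1 : ℤ) * ih

/-- `D_n = q_n ζ_{n+1} + q_{n-1}` in the usual indexing, where `ζ` are the complete quotients;
it is the exact denominator of `q_n α - p_n`. -/
noncomputable def cfD (α : ℝ) (n : ℕ) : ℝ := cfQ α (n + 1) * cq α (n + 1) + cfQ α n

lemma cfD_pos (hα : Irrational α) (n : ℕ) : 0 < cfD α n := by
  have h1 : (1 : ℝ) ≤ cfQ α (n + 1) := by exact_mod_cast one_le_cfQ_succ hα n
  have h2 : (0 : ℝ) ≤ cfQ α n := by exact_mod_cast cfQ_nonneg hα n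
  unfold cfD
  nlinarith [one_lt_cq_succ hα n]

lemma mul_cfD (hα : Irrational α) (n : ℕ) :
    α * cfD α n = cfP α (n + 1) * cq α (n + 1) + cfP α n := by
  induction n with
  | zero =>
    have hX : cq α 1 * (cq α 1)⁻¹ = 1 := mul_inv_cancel₀ (one_pos.trans (one_lt_cq_succ hα 0)).ne'
    have hα0 := cq_eq_cfA_add_inv_cq_succ α 0
    simp only [cfD, cfQ, cfP, cfA] at hα0 ⊢
    rw [cq] at hα0
    push_cast
    linear_combination cq α 1 * hα0 + hX
  | succ n ih =>
    have hX : cq α (n + 2) * (cq α (n + 2))⁻¹ = 1 :=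
      mul_inv_cancel₀ (one_pos.trans (one_lt_cq_succ hα (n + 1))).ne'
    rw [cfD, cq_eq_cfA_add_inv_cq_succ α (n + 1)] at ih
    rw [cfD, cfQ_succ_succ, cfP_succ_succ]
    push_cast
    linear_combination cq α (n + 2) * ih - (α * cfQ α (n + 1) - cfP α (n + 1)) * hX

lemma cfQ_mul_sub_cfP (hα : Irrational α) (n : ℕ) :
    (cfQ α (n + 1) : ℝ) * α - cfP α (n + 1) = (-1) ^ n / cfD α n := by
  have hdet : ((cfP α (n + 1) * cfQ α n - cfP α n * cfQ α (n + 1) : ℤ) : ℝ) = (-1) ^ (n + 1) := by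
    exact_mod_cast cfP_succ_mul_cfQ_sub_cfP_mul_cfQ_succ α n
  push_cast at hdet
  have hD := mul_cfD hα n
  rw [eq_div_iff (cfD_pos hα n).ne', cfD]
  rw [cfD] at hD
  linear_combination (cfQ α (n + 1) : ℝ) * hD - hdet

lemma abs_cfQ_mul_sub_cfP (hα : Irrational α) (n : ℕ) :
    |(cfQ α (n + 1) : ℝ) * α - cfP α (n + 1)| = 1 / cfD α n := by
  rw [cfQ_mul_sub_cfP hα n, abs_div, abs_pow, abs_neg, abs_one, one_pow,
    abs_of_pos (cfD_pos hα n)]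

lemma cfQ_succ_succ_lt_cfD (hα : Irrational α) (n : ℕ) : (cfQ α (n + 2) : ℝ) < cfD α n := by
  have h1 : (1 : ℝ) ≤ cfQ α (n + 1) := by exact_mod_cast one_le_cfQ_succ hα n
  rw [cfD, cfQ_succ_succ]
  push_cast
  nlinarith [cfA_lt_cq hα (n + 1)]

lemma cfD_lt_cfQ_succ_succ_add_cfQ_succ (hα : Irrational α) (n : ℕ) :
    cfD α n < cfQ α (n + 2) + cfQ α (n + 1) := by
  have h1 : (1 : ℝ) ≤ cfQ α (n + 1) := by exact_mod_cast one_le_cfQ_succ hα n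
  rw [cfD, cfQ_succ_succ]
  push_cast
  nlinarith [cq_lt_cfA_add_one hα (n + 1)]

lemma cfQ_mul_sub_cfP_mul_succ_neg (hα : Irrational α) (n : ℕ) :
    ((cfQ α (n + 1) : ℝ) * α - cfP α (n + 1)) * ((cfQ α (n + 2) : ℝ) * α - cfP α (n + 2)) < 0 := by
  rw [cfQ_mul_sub_cfP hα n, cfQ_mul_sub_cfP hα (n + 1), div_mul_div_comm, ← pow_add,
    show n + (n + 1) = 2 * n + 1 by ring, pow_succ, pow_mul]
  norm_num
  exact div_neg_of_neg_of_pos (by norm_num) (mul_pos (cfD_pos hα n) (cfD_pos hα (n + 1)))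

end Convergents

lemma abs_le_abs_add_of_mul_nonneg {R : Type*} [Ring R] [LinearOrder R] [IsStrictOrderedRing R]
    {a b : R} (h : 0 ≤ a * b) : |a| ≤ |a + b| :=
  (le_add_of_nonneg_right (abs_nonneg b)).trans
    ((abs_add_eq_add_abs_iff a b).2 (mul_nonneg_iff.1 h)).ge

lemma abs_cfQ_mul_sub_cfP_le {α : ℝ} (hα : Irrational α) (n : ℕ) {m : ℤ} (p : ℤ)
    (hm : 1 ≤ m) (hmq : m < cfQ α (n + 2)) :
    |(cfQ α (n + 1) : ℝ) * α - cfP α (n + 1)| ≤ |(m : ℝ) * α - p| := by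
  have hQ₁ := one_le_cfQ_succ hα n
  have hQ₂ := one_le_cfQ_succ hα (n + 1)
  have hsq : ((-1 : ℤ)) ^ n * (-1) ^ n = 1 := by rw [← mul_pow]; norm_num
  have hdet := cfP_succ_mul_cfQ_sub_cfP_mul_cfQ_succ α (n + 1)
  -- the unimodular change of coordinates `(m, p) = x (q_n, p_n) + y (q_{n+1}, p_{n+1})`
  set x : ℤ := (-1) ^ n * (m * cfP α (n + 2) - p * cfQ α (n + 2))
  set y : ℤ := (-1) ^ n * (p * cfQ α (n + 1) - m * cfP α (n + 1))
  have hxm : x * cfQ α (n + 1) + y * cfQ α (n + 2) = m := by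
    linear_combination ((-1 : ℤ) ^ n * m) * hdet + m * hsq
  have hxp : x * cfP α (n + 1) + y * cfP α (n + 2) = p := by
    linear_combination ((-1 : ℤ) ^ n * p) * hdet + p * hsq
  have hx : x ≠ 0 := by
    rintro hx
    rw [hx, zero_mul, zero_add] at hxm
    rcases le_or_gt y 0 with hy | hy <;> nlinarith
  have hxy : x * y ≤ 0 := by
    by_contra! hxy
    rcases lt_or_gt_of_ne hx with hx | hx
    · nlinarith [neg_of_mul_pos_right hxy hx.le]
    · nlinarith [pos_of_mul_pos_right hxy hx.le]
  have hsplit : (m : ℝ) * α - p = x * ((cfQ α (n + 1) : ℝ) * α - cfP α (n + 1)) +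
      y * ((cfQ α (n + 2) : ℝ) * α - cfP α (n + 2)) := by
    have hxmR : (x : ℝ) * cfQ α (n + 1) + y * cfQ α (n + 2) = m := by exact_mod_cast hxm
    have hxpR : (x : ℝ) * cfP α (n + 1) + y * cfP α (n + 2) = p := by exact_mod_cast hxp
    linear_combination hxpR - α * hxmR
  have hxyR : (x : ℝ) * y ≤ 0 := by exact_mod_cast hxy
  -- `x, y` have opposite signs and so have consecutive errors: the two terms do not cancel
  have hsign : 0 ≤ (x * ((cfQ α (n + 1) : ℝ) * α - cfP α (n + 1))) *
      (y * ((cfQ α (n + 2) : ℝ) * α - cfP α (n + 2))) := by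
    nlinarith [cfQ_mul_sub_cfP_mul_succ_neg hα n]
  calc |(cfQ α (n + 1) : ℝ) * α - cfP α (n + 1)|
      ≤ |(x : ℝ)| * |(cfQ α (n + 1) : ℝ) * α - cfP α (n + 1)| :=
        le_mul_of_one_le_left (abs_nonneg _) (by exact_mod_cast Int.one_le_abs hx)
    _ ≤ |(m : ℝ) * α - p| := by rw [← abs_mul, hsplit]; exact abs_le_abs_add_of_mul_nonneg hsign

section Bounds

variable {β : ℝ}

lemma exists_cfQ_succ_le_lt (hβ : Irrational β) {m : ℤ} (hm : 1 ≤ m) :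
    ∃ n : ℕ, cfQ β (n + 1) ≤ m ∧ m < cfQ β (n + 2) := by
  classical
  have hex : ∃ n : ℕ, m < cfQ β (n + 1) := by
    refine ⟨m.toNat + 1, ?_⟩
    have := natCast_le_cfQ_succ hβ (m.toNat + 1)
    push_cast at this
    linarith [Int.self_le_toNat m]
  have hspec := Nat.find_spec hex
  obtain ⟨n, hn⟩ : ∃ n, Nat.find hex = n + 1 := Nat.exists_eq_add_one.2 <| Nat.pos_of_ne_zero
    fun h => by rw [h] at hspec; exact absurd hm (not_le.2 hspec)
  rw [hn] at hspec
  exact ⟨n, not_lt.1 (Nat.find_min hex (by omega)), hspec⟩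

lemma one_div_add_two_le_mul_nearestDist (hβ : Irrational β) {N : ℕ}
    (hN : ∀ n, cfA β (n + 1) ≤ N) {m : ℕ} (hm : 0 < m) :
    1 / ((N : ℝ) + 2) ≤ m * nearestDist (m * β) := by
  obtain ⟨n, hqm, hmq⟩ := exists_cfQ_succ_le_lt hβ (m := m) (by exact_mod_cast hm)
  have hbest := abs_cfQ_mul_sub_cfP_le hβ n (round ((m : ℝ) * β)) (by exact_mod_cast hm) hmq
  push_cast at hbest
  have hsum : (cfQ β (n + 2) : ℝ) + cfQ β (n + 1) ≤ ((N : ℝ) + 2) * m := by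
    have ha : (cfA β (n + 1) : ℝ) ≤ N := by exact_mod_cast hN n
    have hq : (cfQ β (n + 1) : ℝ) ≤ m := by exact_mod_cast hqm
    have hq₀ : (cfQ β n : ℝ) ≤ cfQ β (n + 1) := by exact_mod_cast cfQ_le_cfQ_succ hβ n
    have hq₁ : (0 : ℝ) ≤ cfQ β (n + 1) := by exact_mod_cast cfQ_nonneg hβ (n + 1)
    rw [cfQ_succ_succ]
    push_cast
    nlinarith
  have hmR : (0 : ℝ) < m := by exact_mod_cast hm
  calc 1 / ((N : ℝ) + 2) = m * (1 / (((N : ℝ) + 2) * m)) := by field_simp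
    _ ≤ m * (1 / cfD β n) := mul_le_mul_of_nonneg_left (one_div_le_one_div_of_le (cfD_pos hβ n)
        ((cfD_lt_cfQ_succ_succ_add_cfQ_succ hβ n).le.trans hsum)) hmR.le
    _ ≤ m * nearestDist (m * β) := by
        rw [← abs_cfQ_mul_sub_cfP hβ n]
        exact mul_le_mul_of_nonneg_left hbest hmR.le

lemma exists_mul_nearestDist_le_one_div_cfA (hβ : Irrational β) (n : ℕ) :
    ∃ t : ℕ, 0 < t ∧ (t : ℝ) * nearestDist (t * β) ≤ 1 / cfA β (n + 1) := by
  obtain ⟨t, ht⟩ := Int.eq_ofNat_of_zero_le (cfQ_nonneg hβ (n + 1))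
  have hq₁ := one_le_cfQ_succ hβ n
  have ha : (0 : ℝ) < cfA β (n + 1) := by exact_mod_cast one_le_cfA_succ hβ n
  have htR : (t : ℝ) = cfQ β (n + 1) := by exact_mod_cast ht.symm
  have haq : (cfA β (n + 1) : ℝ) * t ≤ cfQ β (n + 2) := by
    have h₀ : (0 : ℝ) ≤ cfQ β n := by exact_mod_cast cfQ_nonneg hβ n
    rw [htR, cfQ_succ_succ]
    push_cast
    linarith
  refine ⟨t, by omega, ?_⟩
  calc (t : ℝ) * nearestDist (t * β)
      ≤ t * (1 / cfD β n) := by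
        rw [← abs_cfQ_mul_sub_cfP hβ n, htR]
        exact mul_le_mul_of_nonneg_left (round_le _ _) (by positivity)
    _ ≤ t * (1 / (cfA β (n + 1) * t)) := by
        refine mul_le_mul_of_nonneg_left (one_div_le_one_div_of_le ?_
          (haq.trans (cfQ_succ_succ_lt_cfD hβ n).le)) (Nat.cast_nonneg t)
        exact mul_pos ha (by rw [htR]; exact_mod_cast hq₁)
    _ = 1 / cfA β (n + 1) := by
        have : (t : ℝ) ≠ 0 := by rw [htR]; exact_mod_cast (by omega : cfQ β (n + 1) ≠ 0)
        field_simp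

end Bounds

noncomputable def twoAdicWeightedDist (α : ℝ) (q : ℕ+) : ℝ :=
  ((q : ℕ) : ℝ) * (2 : ℝ) ^ (-(padicValNat 2 (q : ℕ) : ℤ)) * nearestDist (((q : ℕ) : ℝ) * α)

section TwoAdic

variable (α : ℝ) {q : ℕ+} {k t : ℕ}

lemma twoAdicWeightedDist_nonneg (q : ℕ+) : 0 ≤ twoAdicWeightedDist α q :=
  mul_nonneg (by positivity) (abs_nonneg _)

lemma mul_two_zpow_neg_mul_nearestDist (hq : (q : ℕ) = 2 ^ k * t) :
    ((q : ℕ) : ℝ) * (2 : ℝ) ^ (-(k : ℤ)) * nearestDist (((q : ℕ) : ℝ) * α) =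
      t * nearestDist (t * (2 ^ k * α)) := by
  have hqR : ((q : ℕ) : ℝ) = 2 ^ k * t := by exact_mod_cast hq
  rw [hqR, zpow_neg, zpow_natCast, mul_comm (2 ^ k : ℝ) t, mul_assoc (t : ℝ)]
  field_simp

lemma twoAdicWeightedDist_le (hq : (q : ℕ) = 2 ^ k * t) :
    twoAdicWeightedDist α q ≤ t * nearestDist (t * (2 ^ k * α)) := by
  have hk : k ≤ padicValNat 2 q := (padicValNat_dvd_iff_le q.ne_zero).1 ⟨t, hq⟩
  rw [← mul_two_zpow_neg_mul_nearestDist α hq, twoAdicWeightedDist]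
  refine mul_le_mul_of_nonneg_right (mul_le_mul_of_nonneg_left ?_ (Nat.cast_nonneg _))
    (abs_nonneg _)
  exact zpow_le_zpow_right₀ one_le_two (neg_le_neg (by exact_mod_cast hk))

lemma exists_twoAdicWeightedDist_eq (q : ℕ+) :
    ∃ k t : ℕ, 0 < t ∧ twoAdicWeightedDist α q = t * nearestDist (t * (2 ^ k * α)) := by
  have hq : (q : ℕ) = 2 ^ padicValNat 2 q * (q / 2 ^ padicValNat 2 q) :=
    (Nat.mul_div_cancel' pow_padicValNat_dvd).symm
  refine ⟨_, _, Nat.pos_of_ne_zero fun h => q.ne_zero ?_, mul_two_zpow_neg_mul_nearestDist α hq⟩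
  rw [hq, h, mul_zero]

end TwoAdic

lemma irrational_two_pow_mul {α : ℝ} (hα : Irrational α) (k : ℕ) : Irrational (2 ^ k * α) := by
  simpa using hα.natCast_mul (m := 2 ^ k) (by positivity)

lemma iSup_Mq_lt_top_iff (α : ℝ) :
    (⨆ k : ℕ, Mq (2 ^ k * α)) < ⊤ ↔ ∃ N : ℕ, ∀ k n, cfA (2 ^ k * α) (n + 1) ≤ N := by
  simp only [Mq]
  rw [iSup_prod', ENat.iSup_natCast_lt_top]
  simp only [bddAbove_def, Set.forall_mem_range, Prod.forall, Int.toNat_le]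

lemma cfA_le_of_le_twoAdicWeightedDist {α : ℝ} (hα : Irrational α) {c : ℝ} (hc : 0 < c)
    (h : ∀ q, c ≤ twoAdicWeightedDist α q) (k n : ℕ) : (cfA (2 ^ k * α) (n + 1) : ℝ) ≤ 1 / c := by
  have hβ := irrational_two_pow_mul hα k
  obtain ⟨t, ht, hbound⟩ := exists_mul_nearestDist_le_one_div_cfA hβ n
  have ha : (0 : ℝ) < cfA (2 ^ k * α) (n + 1) := by exact_mod_cast one_le_cfA_succ hβ n
  refine (le_one_div ha hc).2 ((h ⟨2 ^ k * t, by positivity⟩).trans ?_)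
  exact (twoAdicWeightedDist_le α rfl).trans hbound

lemma one_div_add_two_le_twoAdicWeightedDist {α : ℝ} (hα : Irrational α) {N : ℕ}
    (hN : ∀ k n, cfA (2 ^ k * α) (n + 1) ≤ N) (q : ℕ+) :
    1 / ((N : ℝ) + 2) ≤ twoAdicWeightedDist α q := by
  obtain ⟨k, t, ht, heq⟩ := exists_twoAdicWeightedDist_eq α q
  rw [heq]
  exact one_div_add_two_le_mul_nearestDist (irrational_two_pow_mul hα k) (hN k) ht

/-- For irrational `α`, `inf_{q ≥ 1} q ⬝ |q|₂ ⬝ ‖qα‖ > 0` iff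
`sup_{k ≥ 0} M(2^k α) < ∞`. -/
theorem stmt2 (α : ℝ) (hα : Irrational α) :
    (0 < ⨅ q : ℕ+, ((q : ℕ) : ℝ) * (2 : ℝ) ^ (-(padicValNat 2 (q : ℕ) : ℤ)) *
        nearestDist (((q : ℕ) : ℝ) * α)) ↔
      (⨆ k : ℕ, Mq ((2 : ℝ) ^ k * α)) < ⊤ := by
  change 0 < ⨅ q, twoAdicWeightedDist α q ↔ _
  rw [iSup_Mq_lt_top_iff]
  constructor
  · intro hc
    refine ⟨⌈1 / ⨅ q, twoAdicWeightedDist α q⌉₊, fun k n => ?_⟩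
    have hle := cfA_le_of_le_twoAdicWeightedDist hα hc
      (ciInf_le ⟨0, Set.forall_mem_range.2 (twoAdicWeightedDist_nonneg α)⟩) k n
    exact_mod_cast hle.trans (Nat.le_ceil _)
  · rintro ⟨N, hN⟩
    exact (by positivity : (0 : ℝ) < 1 / ((N : ℝ) + 2)).trans_le
      (le_ciInf (one_div_add_two_le_twoAdicWeightedDist hα hN))
end

section
/- For all integers m, a, b ≥ 0 and every real number θ > 1, the following two identities hold: 2 · [a; 2m, b, θ] = [2a; m, 2b, θ/2] and 2 · [a; 2m+1, θ] = [2a; m, 1, 1, (θ−1)/2]. -/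
open Filter

/-- Hurwitz's identities: for integers `m, a, b ≥ 0` and real `θ > 1`,
`2⬝[a; 2m, b, θ] = [2a; m, 2b, θ/2]` and `2⬝[a; 2m+1, θ] = [2a; m, 1, 1, (θ-1)/2]`. -/
theorem stmt6 (m a b : ℤ) (hm : 0 ≤ m) (ha : 0 ≤ a) (hb : 0 ≤ b) (θ : ℝ) (hθ : 1 < θ) :
    2 * ((a : ℝ) + 1 / (2 * (m : ℝ) + 1 / ((b : ℝ) + 1 / θ))) =
      2 * (a : ℝ) + 1 / ((m : ℝ) + 1 / (2 * (b : ℝ) + 1 / (θ / 2))) ∧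
    2 * ((a : ℝ) + 1 / (2 * (m : ℝ) + 1 + 1 / θ)) =
      2 * (a : ℝ) + 1 / ((m : ℝ) + 1 / (1 + 1 / (1 + 1 / ((θ - 1) / 2)))) := by
  have hθ0 : (0:ℝ) < θ := lt_trans one_pos hθ
  have hm' : (0:ℝ) ≤ (m:ℝ) := by exact_mod_cast hm
  have hb' : (0:ℝ) ≤ (b:ℝ) := by exact_mod_cast hb
  have h1 : (0:ℝ) < (b:ℝ) + 1/θ := by positivity
  have h2 : (0:ℝ) < 2*(m:ℝ) + 1/((b:ℝ)+1/θ) := by positivity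
  have h3 : (0:ℝ) < 2*(b:ℝ) + 1/(θ/2) := by positivity
  have h4 : (0:ℝ) < (m:ℝ) + 1/(2*(b:ℝ)+1/(θ/2)) := by positivity
  have h5 : (0:ℝ) < 2*(m:ℝ) + 1 + 1/θ := by positivity
  have hθ1 : (0:ℝ) < θ - 1 := by linarith
  have h6 : (0:ℝ) < 1 + 1/((θ-1)/2) := by positivity
  have h7 : (0:ℝ) < 1 + 1/(1 + 1/((θ-1)/2)) := by positivity
  have h8 : (0:ℝ) < (m:ℝ) + 1/(1 + 1/(1 + 1/((θ-1)/2))) := by positivity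
  constructor
  · field_simp
  · field_simp
    ring
end

section
/- Let α be a real irrational such that α is equivalent to α/2 and equivalent to (α+1)/2. Then for every real irrational β equivalent to α, exactly two of the three numbers 2β, β/2, (β+1)/2 are equivalent to α. -/
open Filter

/-!
Write `β = V α` with `V ∈ GL₂(ℤ)`. The numbers `2β`, `β/2`, `(β+1)/2` are `T β` for integer
matrices `T` of determinant 2 whose reductions mod 2 have the three lines `k` of `(ℤ/2)²` as
kernels, and `T β ∼ α` exactly when `α` is fixed by an integer matrix of determinant `±2` whose
reduction kills `V⁻¹ k`. Integer matrices fixing an irrational commute, and over `ZMod 2` a nonzero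
matrix killing one line cannot commute with nonzero matrices killing the other two; so at most two
lines are kernels of such stabilizers of `α`. The hypotheses make the lines of `(0,1)` and `(1,1)`
kernels, hence not that of `(1,0)`, and since `V⁻¹` permutes the three lines, exactly one of the
three numbers fails to be equivalent to `α`.
-/

open Matrix

theorem Irrational.eq_zero_of_intCast_mul_add {x : ℝ} (hx : Irrational x) {p q : ℤ}
    (h : (p : ℝ) * x + q = 0) : p = 0 ∧ q = 0 := by
  by_cases hp : p = 0
  · subst hp
    exact ⟨rfl, by simpa using h⟩
  · exact absurd (h ▸ (hx.intCast_mul hp).add_intCast q) not_irrational_zero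

/-- `M` maps `x` to `y` as a Möbius transformation, with the denominator cleared. -/
def MobiusMaps (M : Matrix (Fin 2) (Fin 2) ℤ) (x y : ℝ) : Prop :=
  (M 0 0 : ℝ) * x + M 0 1 = y * ((M 1 0 : ℝ) * x + M 1 1)

namespace MobiusMaps

variable {M N : Matrix (Fin 2) (Fin 2) ℤ} {x y z : ℝ}

theorem one (x : ℝ) : MobiusMaps 1 x x := by
  simp [MobiusMaps]

theorem mul (hM : MobiusMaps M x y) (hN : MobiusMaps N y z) : MobiusMaps (N * M) x z := by
  unfold MobiusMaps at *
  simp only [mul_apply, Fin.sum_univ_two]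
  push_cast
  linear_combination ((N 0 0 : ℝ) - z * N 1 0) * hM + ((M 1 0 : ℝ) * x + M 1 1) * hN

theorem adjugate (hM : MobiusMaps M x y) : MobiusMaps M.adjugate y x := by
  unfold MobiusMaps at *
  simp only [adjugate_fin_two, of_apply, cons_val', cons_val_zero, cons_val_one, empty_val',
    cons_val_fin_one, Int.cast_neg]
  linear_combination -hM

theorem smul_iff {c : ℤ} (hc : c ≠ 0) : MobiusMaps (c • M) x y ↔ MobiusMaps M x y := by
  have hc' : (c : ℝ) ≠ 0 := by exact_mod_cast hc
  simp only [MobiusMaps, Matrix.smul_apply, smul_eq_mul, Int.cast_mul]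
  constructor <;> intro h
  · exact mul_left_cancel₀ hc' (by linear_combination h)
  · linear_combination (c : ℝ) * h

theorem denom_ne_zero (hx : Irrational x) (hM : M.det ≠ 0) : (M 1 0 : ℝ) * x + M 1 1 ≠ 0 := by
  intro h
  obtain ⟨h10, h11⟩ := hx.eq_zero_of_intCast_mul_add h
  simp [det_fin_two, h10, h11] at hM

/-- The entries of `M * N - N * M` are the `2 × 2` minors of the coefficient vectors
`(c, d - a, b)` of the relations `c x² + (d - a) x - b = 0`, which are proportional by
irrationality of `x`. -/
theorem commute (hx : Irrational x) (hM : MobiusMaps M x x) (hN : MobiusMaps N x x) :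
    Commute M N := by
  unfold MobiusMaps at hM hN
  obtain ⟨h₁, h₂⟩ := hx.eq_zero_of_intCast_mul_add
    (p := N 1 0 * (M 1 1 - M 0 0) - M 1 0 * (N 1 1 - N 0 0))
    (q := M 1 0 * N 0 1 - N 1 0 * M 0 1) (by push_cast; linear_combination M 1 0 * hN - N 1 0 * hM)
  obtain ⟨-, h₃⟩ := hx.eq_zero_of_intCast_mul_add
    (p := M 1 0 * N 0 1 - N 1 0 * M 0 1)
    (q := (M 1 1 - M 0 0) * N 0 1 - (N 1 1 - N 0 0) * M 0 1)
    (mul_left_cancel₀ hx.ne_zero (by push_cast; linear_combination M 0 1 * hN - N 0 1 * hM))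
  ext i j
  fin_cases i <;> fin_cases j <;> simp [mul_apply, Fin.sum_univ_two] <;> linarith

end MobiusMaps

theorem cfEquiv_iff_exists_mobiusMaps {x y : ℝ} (hx : Irrational x) :
    CfEquiv x y ↔ ∃ M : Matrix (Fin 2) (Fin 2) ℤ, M.det.natAbs = 1 ∧ MobiusMaps M x y := by
  constructor
  · rintro ⟨a, b, c, d, hdet, rfl⟩
    have hdet' : (!![a, b; c, d]).det.natAbs = 1 := by
      rw [det_fin_two_of]
      omega
    refine ⟨!![a, b; c, d], hdet', ?_⟩
    have := MobiusMaps.denom_ne_zero hx (M := !![a, b; c, d]) (by omega)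
    simp only [MobiusMaps, of_apply, cons_val', cons_val_zero, cons_val_one, empty_val',
      cons_val_fin_one] at this ⊢
    rw [div_mul_cancel₀ _ this]
  · rintro ⟨M, hdet, hM⟩
    refine ⟨M 0 0, M 0 1, M 1 0, M 1 1, by rw [← det_fin_two]; omega, ?_⟩
    rw [eq_div_iff (MobiusMaps.denom_ne_zero hx (by omega))]
    exact hM.symm

theorem CfEquiv.symm {x y : ℝ} (hx : Irrational x) (hy : Irrational y) (h : CfEquiv x y) :
    CfEquiv y x := by
  obtain ⟨M, hdet, hM⟩ := (cfEquiv_iff_exists_mobiusMaps hx).1 h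
  exact (cfEquiv_iff_exists_mobiusMaps hy).2 ⟨M.adjugate, by simpa [det_adjugate], hM.adjugate⟩

abbrev mod2 : Matrix (Fin 2) (Fin 2) ℤ →+* Matrix (Fin 2) (Fin 2) (ZMod 2) :=
  (Int.castRingHom (ZMod 2)).mapMatrix

theorem exists_eq_two_smul_of_mod2_eq_zero {M : Matrix (Fin 2) (Fin 2) ℤ} (h : mod2 M = 0) :
    ∃ N, M = (2 : ℤ) • N := by
  refine ⟨M.map (· / 2), ext fun i j => ?_⟩
  have h2 : ((M i j : ℤ) : ZMod 2) = 0 := congrFun (congrFun h i) j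
  rw [ZMod.intCast_zmod_eq_zero_iff_dvd] at h2
  simp only [Matrix.smul_apply, map_apply, smul_eq_mul]
  omega

theorem mod2_ne_zero_of_natAbs_det_eq_two {M : Matrix (Fin 2) (Fin 2) ℤ}
    (hdet : M.det.natAbs = 2) : mod2 M ≠ 0 := by
  intro h
  obtain ⟨N, rfl⟩ := exists_eq_two_smul_of_mod2_eq_zero h
  rw [det_smul, Int.natAbs_mul] at hdet
  norm_num at hdet
  omega

theorem mod2_mul_mod2_adjugate {V : Matrix (Fin 2) (Fin 2) ℤ} (hV : V.det.natAbs = 1) :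
    mod2 V * mod2 V.adjugate = 1 := by
  rw [← map_mul, mul_adjugate]
  rcases Int.natAbs_eq_iff.1 hV with h | h <;> rw [h]
  · simp
  · rw [neg_smul, map_neg]
    decide

theorem mod2_mulVec_ne_zero {V : Matrix (Fin 2) (Fin 2) ℤ} (hV : V.det.natAbs = 1)
    {v : Fin 2 → ZMod 2} (hv : v ≠ 0) : mod2 V *ᵥ v ≠ 0 := fun h => hv <| by
  rw [← one_mulVec v, ← mul_eq_one_comm.1 (mod2_mul_mod2_adjugate hV), ← mulVec_mulVec, h,
    mulVec_zero]

def HasStabKernel (α : ℝ) (v : Fin 2 → ZMod 2) : Prop :=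
  ∃ M : Matrix (Fin 2) (Fin 2) ℤ, MobiusMaps M α α ∧ M.det.natAbs = 2 ∧ mod2 M *ᵥ v = 0

set_option synthInstance.maxSize 2000 in
theorem Matrix.false_of_commute_of_kernel_lines :
    ∀ P : Matrix (Fin 2) (Fin 2) (ZMod 2), P *ᵥ ![1, 0] = 0 → P ≠ 0 →
    ∀ Q : Matrix (Fin 2) (Fin 2) (ZMod 2), Q *ᵥ ![0, 1] = 0 → Q ≠ 0 →
    ∀ R : Matrix (Fin 2) (Fin 2) (ZMod 2), R *ᵥ ![1, 1] = 0 → R ≠ 0 →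
    P * Q = Q * P → P * R = R * P → False := by
  decide

theorem not_hasStabKernel_all {α : ℝ} (hα : Irrational α) :
    ¬ (HasStabKernel α ![1, 0] ∧ HasStabKernel α ![0, 1] ∧ HasStabKernel α ![1, 1]) := by
  rintro ⟨⟨P, hP, hPdet, hPk⟩, ⟨Q, hQ, hQdet, hQk⟩, ⟨R, hR, hRdet, hRk⟩⟩
  exact Matrix.false_of_commute_of_kernel_lines
    _ hPk (mod2_ne_zero_of_natAbs_det_eq_two hPdet)
    _ hQk (mod2_ne_zero_of_natAbs_det_eq_two hQdet)
    _ hRk (mod2_ne_zero_of_natAbs_det_eq_two hRdet)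
    ((hP.commute hα hQ).map mod2) ((hP.commute hα hR).map mod2)

def IsHalvingAt (T : Matrix (Fin 2) (Fin 2) ℤ) (k : Fin 2 → ZMod 2) : Prop :=
  T.det.natAbs = 2 ∧ mod2 T *ᵥ k = 0 ∧ ∃ u, mod2 T.adjugate = vecMulVec k u

theorem IsHalvingAt.ne_zero {T : Matrix (Fin 2) (Fin 2) ℤ} {k : Fin 2 → ZMod 2}
    (hT : IsHalvingAt T k) : k ≠ 0 := by
  obtain ⟨hdet, -, u, hu⟩ := hT
  rintro rfl
  refine mod2_ne_zero_of_natAbs_det_eq_two (M := T.adjugate) ?_ (by simpa using hu)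
  simpa [det_adjugate] using hdet

theorem isHalvingAt_two_mul : IsHalvingAt !![2, 0; 0, 1] ![1, 0] :=
  ⟨by simp [det_fin_two_of], by decide, ![1, 0], by rw [adjugate_fin_two_of]; decide⟩

theorem isHalvingAt_div_two : IsHalvingAt !![1, 0; 0, 2] ![0, 1] :=
  ⟨by simp [det_fin_two_of], by decide, ![0, 1], by rw [adjugate_fin_two_of]; decide⟩

theorem isHalvingAt_add_one_div_two : IsHalvingAt !![1, 1; 0, 2] ![1, 1] :=
  ⟨by simp [det_fin_two_of], by decide, ![0, 1], by rw [adjugate_fin_two_of]; decide⟩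

theorem mobiusMaps_two_mul (x : ℝ) : MobiusMaps !![2, 0; 0, 1] x (2 * x) := by
  simp [MobiusMaps]

theorem mobiusMaps_div_two (x : ℝ) : MobiusMaps !![1, 0; 0, 2] x (x / 2) := by
  simp [MobiusMaps]

theorem mobiusMaps_add_one_div_two (x : ℝ) : MobiusMaps !![1, 1; 0, 2] x ((x + 1) / 2) := by
  simp [MobiusMaps]

/-- Backwards: the reduction of `M * (adjugate V * adjugate T)` vanishes because `adjugate T` has
image the line of `k`, so half of it is a unimodular map from `γ` to `α`. -/
theorem cfEquiv_iff_hasStabKernel {α β γ : ℝ} (hγ : Irrational γ)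
    {V T : Matrix (Fin 2) (Fin 2) ℤ} {k : Fin 2 → ZMod 2}
    (hV : V.det.natAbs = 1) (hVαβ : MobiusMaps V α β)
    (hT : IsHalvingAt T k) (hTβγ : MobiusMaps T β γ) :
    CfEquiv γ α ↔ HasStabKernel α (mod2 V.adjugate *ᵥ k) := by
  obtain ⟨hT, hTk, u, hTadj⟩ := hT
  rw [cfEquiv_iff_exists_mobiusMaps hγ]
  constructor
  · rintro ⟨U, hU, hUγα⟩
    refine ⟨U * (T * V), (hVαβ.mul hTβγ).mul hUγα, by simp [det_mul, Int.natAbs_mul, hU, hT, hV],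
      ?_⟩
    rw [map_mul, map_mul, ← mulVec_mulVec, ← mulVec_mulVec, mulVec_mulVec _ (mod2 V),
      mod2_mul_mod2_adjugate hV, one_mulVec, hTk, mulVec_zero]
  · rintro ⟨M, hM, hMdet, hMk⟩
    have hW : mod2 (M * (V.adjugate * T.adjugate)) = 0 := by
      rw [map_mul, map_mul, hTadj, mul_vecMulVec, mul_vecMulVec, hMk, zero_vecMulVec]
    obtain ⟨U, hU⟩ := exists_eq_two_smul_of_mod2_eq_zero hW
    have hWdet := congrArg (fun W => W.det.natAbs) hU
    simp only [det_mul, det_adjugate, det_smul, Int.natAbs_mul, Int.natAbs_pow, hMdet, hV, hT,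
      Fintype.card_fin] at hWdet
    norm_num at hWdet
    refine ⟨U, hWdet, (MobiusMaps.smul_iff two_ne_zero).1 ?_⟩
    rw [← hU]
    exact (hTβγ.adjugate.mul hVαβ.adjugate).mul hM

theorem hasStabKernel_iff_ne {α : ℝ} (hα : Irrational α) (h₁ : CfEquiv α (α / 2))
    (h₂ : CfEquiv α ((α + 1) / 2)) (v : Fin 2 → ZMod 2) (hv : v ≠ 0) :
    HasStabKernel α v ↔ v ≠ ![1, 0] := by
  have hα₁ : Irrational (α / 2) := by simpa using hα.div_natCast two_ne_zero
  have hα₂ : Irrational ((α + 1) / 2) := by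
    simpa using (hα.add_natCast 1).div_natCast two_ne_zero
  have hS₁ : HasStabKernel α ![0, 1] := by
    simpa using (cfEquiv_iff_hasStabKernel hα₁ (by simp) (MobiusMaps.one α) isHalvingAt_div_two
      (mobiusMaps_div_two α)).1 (h₁.symm hα hα₁)
  have hS₂ : HasStabKernel α ![1, 1] := by
    simpa using (cfEquiv_iff_hasStabKernel hα₂ (by simp) (MobiusMaps.one α)
      isHalvingAt_add_one_div_two (mobiusMaps_add_one_div_two α)).1 (h₂.symm hα hα₂)
  obtain rfl | rfl | rfl | rfl : v = 0 ∨ v = ![1, 0] ∨ v = ![0, 1] ∨ v = ![1, 1] := by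
    revert v; decide
  · exact absurd rfl hv
  · simpa using fun h => not_hasStabKernel_all hα ⟨h, hS₁, hS₂⟩
  · simpa using hS₁
  · simpa using hS₂

theorem cfEquiv_iff_ne_mod2_mulVec {α β γ : ℝ}
    (hS : ∀ v : Fin 2 → ZMod 2, v ≠ 0 → (HasStabKernel α v ↔ v ≠ ![1, 0])) (hγ : Irrational γ)
    {V T : Matrix (Fin 2) (Fin 2) ℤ} {k : Fin 2 → ZMod 2}
    (hV : V.det.natAbs = 1) (hVαβ : MobiusMaps V α β)
    (hT : IsHalvingAt T k) (hTβγ : MobiusMaps T β γ) :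
    CfEquiv γ α ↔ k ≠ mod2 V *ᵥ ![1, 0] := by
  have hVV : mod2 V * mod2 V.adjugate = 1 := mod2_mul_mod2_adjugate hV
  have hVV' : mod2 V.adjugate * mod2 V = 1 := mul_eq_one_comm.1 hVV
  have hk : mod2 V.adjugate *ᵥ k ≠ 0 :=
    mod2_mulVec_ne_zero (by simpa [det_adjugate] using hV) hT.ne_zero
  rw [cfEquiv_iff_hasStabKernel hγ hV hVαβ hT hTβγ, hS _ hk, not_iff_not]
  constructor <;> intro h
  · rw [← one_mulVec k, ← hVV, ← mulVec_mulVec, h]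
  · rw [h, mulVec_mulVec, hVV', one_mulVec]

/-- If `α ∼ α/2` and `α ∼ (α+1)/2`, then for each irrational `β ∼ α` exactly two of the
three numbers `2β`, `β/2`, `(β+1)/2` are equivalent to `α`. -/
theorem stmt9 (α : ℝ) (hirr : Irrational α)
    (h1 : CfEquiv α (α / 2)) (h2 : CfEquiv α ((α + 1) / 2)) :
    ∀ β : ℝ, Irrational β → CfEquiv α β →
      ((CfEquiv (2 * β) α ∧ CfEquiv (β / 2) α ∧ ¬ CfEquiv ((β + 1) / 2) α) ∨
       (CfEquiv (2 * β) α ∧ ¬ CfEquiv (β / 2) α ∧ CfEquiv ((β + 1) / 2) α) ∨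
       (¬ CfEquiv (2 * β) α ∧ CfEquiv (β / 2) α ∧ CfEquiv ((β + 1) / 2) α)) := by
  intro β hβ hαβ
  obtain ⟨V, hV, hVαβ⟩ := (cfEquiv_iff_exists_mobiusMaps hirr).1 hαβ
  have hS := hasStabKernel_iff_ne hirr h1 h2
  rw [cfEquiv_iff_ne_mod2_mulVec hS (by simpa using hβ.natCast_mul two_ne_zero) hV hVαβ
      isHalvingAt_two_mul (mobiusMaps_two_mul β),
    cfEquiv_iff_ne_mod2_mulVec hS (by simpa using hβ.div_natCast two_ne_zero) hV hVαβ
      isHalvingAt_div_two (mobiusMaps_div_two β),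
    cfEquiv_iff_ne_mod2_mulVec hS (by simpa using (hβ.add_natCast 1).div_natCast two_ne_zero)
      hV hVαβ isHalvingAt_add_one_div_two (mobiusMaps_add_one_div_two β)]
  have hu : mod2 V *ᵥ ![1, 0] ≠ 0 := mod2_mulVec_ne_zero hV (by decide)
  generalize mod2 V *ᵥ ![1, 0] = u at hu ⊢
  revert u
  decide
end

section
/- Let m ≥ 3 be an odd integer and let α be a (real) root of the polynomial x² − mx − 2. Then α is equivalent to α/2 and α is equivalent to (α+1)/2. -/
open Filter

/-!
From `α (α - m) = 2` we get `α / 2 = 1 / (α - m)` and `1 / α = (α - m) / 2`; for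
`m = 2k + 1` the latter gives `(α + 1) / 2 = (k + 1) + 1 / α`. Both `x ↦ 1 / (x - m)` and
`x ↦ n + 1 / x` are integer Möbius maps of determinant `-1`.
-/

lemma cfEquiv_inv_sub_intCast (x : ℝ) (n : ℤ) : CfEquiv x (x - n)⁻¹ :=
  ⟨0, 1, 1, -n, Or.inr (by ring), by push_cast; ring⟩

lemma cfEquiv_intCast_add_inv {x : ℝ} (hx : x ≠ 0) (n : ℤ) : CfEquiv x (n + x⁻¹) :=
  ⟨n, 1, 1, 0, Or.inr (by ring), by
    rw [Int.cast_one, Int.cast_zero, one_mul, add_zero, add_div, mul_div_cancel_right₀ _ hx,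
      one_div]⟩

theorem stmt11_general (m : ℤ) (hodd : Odd m) (α : ℝ)
    (hroot : α ^ 2 - (m : ℝ) * α - 2 = 0) :
    CfEquiv α (α / 2) ∧ CfEquiv α ((α + 1) / 2) := by
  have hprod : α * (α - m) = 2 := by linear_combination hroot
  have hα : α ≠ 0 := left_ne_zero_of_mul (hprod ▸ two_ne_zero)
  have hhalf : α / 2 = (α - m)⁻¹ :=
    (inv_eq_of_mul_eq_one_right (by linear_combination hprod / 2)).symm
  have hinv : α⁻¹ = (α - m) / 2 := inv_eq_of_mul_eq_one_right (by linear_combination hprod / 2)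
  obtain ⟨k, rfl⟩ := hodd
  have hshift : (α + 1) / 2 = ((k + 1 : ℤ) : ℝ) + α⁻¹ := by
    rw [hinv]; push_cast; ring
  exact ⟨hhalf ▸ cfEquiv_inv_sub_intCast α _, hshift ▸ cfEquiv_intCast_add_inv hα _⟩

/-- For odd `m ≥ 3` and `α` a real root of `x² - mx - 2`, we have `α ∼ α/2` and
`α ∼ (α+1)/2`. -/
theorem stmt11 (m : ℤ) (hodd : Odd m) (hm : 3 ≤ m) (α : ℝ)
    (hroot : α ^ 2 - (m : ℝ) * α - 2 = 0) :
    CfEquiv α (α / 2) ∧ CfEquiv α ((α + 1) / 2) :=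
  stmt11_general m hodd α hroot
end

section
/- Let m ≥ 3 be an odd integer and let α = (m + √(m² + 8))/2 be the positive root of x² − mx − 2. Then the continued fraction expansion of α is purely periodic of the shape α = [\overline{m; a_1, …, a_n}], where the word a_1 a_2 ⋯ a_n is a palindrome and a_i ≤ m for all 1 ≤ i ≤ n. -/
open Filter

namespace Stmt12Aux

noncomputable def sq (m : ℤ) : ℝ := Real.sqrt ((m : ℝ) ^ 2 + 8)

noncomputable def pqstep (m : ℤ) (x : ℤ × ℤ) : ℤ × ℤ :=
  (⌊((x.1 : ℝ) + sq m) / (x.2 : ℝ)⌋ * x.2 - x.1,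
   (m ^ 2 + 8 - (⌊((x.1 : ℝ) + sq m) / (x.2 : ℝ)⌋ * x.2 - x.1) ^ 2) / x.2)

noncomputable def pq (m : ℤ) : ℕ → ℤ × ℤ :=
  fun k => Nat.rec (m, 2) (fun _ ih => pqstep m ih) k

lemma pq_zero (m : ℤ) : pq m 0 = (m, 2) := rfl
lemma pq_succ (m : ℤ) (k : ℕ) : pq m (k + 1) = pqstep m (pq m k) := rfl

noncomputable def xi (m : ℤ) (k : ℕ) : ℝ := (((pq m k).1 : ℝ) + sq m) / ((pq m k).2 : ℝ)
noncomputable def xc (m : ℤ) (k : ℕ) : ℝ := (((pq m k).1 : ℝ) - sq m) / ((pq m k).2 : ℝ)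
noncomputable def aq (m : ℤ) (k : ℕ) : ℤ := ⌊xi m k⌋
noncomputable def eta (m : ℤ) (k : ℕ) : ℝ := ((pq m k).2 : ℝ) / (sq m - ((pq m k).1 : ℝ))

lemma s_nonneg (m : ℤ) : 0 ≤ sq m := Real.sqrt_nonneg _

lemma s_sq (m : ℤ) : sq m ^ 2 = (m : ℝ) ^ 2 + 8 :=
  Real.sq_sqrt (by positivity)

lemma s_gt (m : ℤ) (hm : 3 ≤ m) : (m : ℝ) < sq m := by
  have h1 := s_sq m
  have h2 := s_nonneg m
  have hm' : (3 : ℝ) ≤ (m : ℝ) := by exact_mod_cast hm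
  nlinarith

lemma s_lt (m : ℤ) (hm : 3 ≤ m) : sq m < (m : ℝ) + 2 := by
  have h1 := s_sq m
  have h2 := s_nonneg m
  have hm' : (3 : ℝ) ≤ (m : ℝ) := by exact_mod_cast hm
  nlinarith

lemma s_pos (m : ℤ) (hm : 3 ≤ m) : 0 < sq m := by
  have := s_gt m hm
  have hm' : (3 : ℝ) ≤ (m : ℝ) := by exact_mod_cast hm
  linarith

lemma s_irr (m : ℤ) (hm : 3 ≤ m) : Irrational (sq m) := by
  have h2 : sq m ^ 2 = ((m ^ 2 + 8 : ℤ) : ℝ) := by push_cast; exact s_sq m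
  refine irrational_nrt_of_notint_nrt 2 (m ^ 2 + 8) h2 ?_ two_pos
  rintro ⟨y, hy⟩
  have hy2 : (y : ℝ) ^ 2 = ((m ^ 2 + 8 : ℤ) : ℝ) := by rw [← hy]; exact h2
  have hy2' : y ^ 2 = m ^ 2 + 8 := by exact_mod_cast hy2
  have hygt : m < y := by
    have h1 : (m : ℝ) < (y : ℝ) := by rw [← hy]; exact s_gt m hm
    exact_mod_cast h1
  have hylt : (y : ℝ) < (m : ℝ) + 2 := by rw [← hy]; exact s_lt m hm
  have hylt' : y < m + 2 := by exact_mod_cast hylt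
  -- so y = m + 1, y^2 = m^2 + 2m + 1 = m^2 + 8 → 2m = 7, impossible
  have : y = m + 1 := by omega
  subst this
  ring_nf at hy2'
  omega

structure Inv (m : ℤ) (k : ℕ) : Prop where
  podd : Odd (pq m k).1
  qeven : Even (pq m k).2
  qpos : 0 < (pq m k).2
  hdvd : (pq m k).2 ∣ m ^ 2 + 8 - (pq m k).1 ^ 2
  heven : Even ((m ^ 2 + 8 - (pq m k).1 ^ 2) / (pq m k).2)
  hxi : 1 < xi m k
  hc1 : -1 < xc m k
  hc0 : xc m k < 0

lemma inv_zero (m : ℤ) (hodd : Odd m) (hm : 3 ≤ m) : Inv m 0 := by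
  have hgt := s_gt m hm
  have hlt := s_lt m hm
  have hm' : (3 : ℝ) ≤ (m : ℝ) := by exact_mod_cast hm
  constructor
  · simpa only [pq_zero] using hodd
  · rw [pq_zero]; exact ⟨1, rfl⟩
  · rw [pq_zero]; norm_num
  · rw [pq_zero]; exact ⟨4, by ring⟩
  · rw [pq_zero]
    have h8 : (m ^ 2 + 8 - (m, 2).1 ^ 2) / (m, 2).2 = 4 := by norm_num
    rw [h8]; decide
  · show 1 < xi m 0
    have h0 : xi m 0 = ((m : ℝ) + sq m) / 2 := by simp [xi, pq_zero]
    rw [h0]; linarith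
  · show -1 < xc m 0
    have h0 : xc m 0 = ((m : ℝ) - sq m) / 2 := by simp [xc, pq_zero]
    rw [h0]; linarith
  · show xc m 0 < 0
    have h0 : xc m 0 = ((m : ℝ) - sq m) / 2 := by simp [xc, pq_zero]
    rw [h0]; linarith

lemma inv_step (m : ℤ) (hm : 3 ≤ m) (k : ℕ) (h : Inv m k) :
    Inv m (k + 1) ∧ xi m (k + 1) = (Int.fract (xi m k))⁻¹ ∧
      xc m (k + 1) = (xc m k - (aq m k : ℝ))⁻¹ ∧
      (m ^ 2 + 8 - (pq m (k + 1)).1 ^ 2) / (pq m (k + 1)).2 = (pq m k).2 := by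
  obtain ⟨podd, qeven, qpos, hdvd, heven, hxi, hc1, hc0⟩ := h
  have hs0 : 0 < sq m := s_pos m hm
  have hss : sq m ^ 2 = (m : ℝ) ^ 2 + 8 := s_sq m
  have hirr : Irrational (sq m) := s_irr m hm
  set P := (pq m k).1 with hP
  set Q := (pq m k).2 with hQ
  set a : ℤ := aq m k with ha
  have hQR : (0 : ℝ) < (Q : ℝ) := by exact_mod_cast qpos
  have hpq1 : (pq m (k + 1)).1 = a * Q - P := by
    rw [pq_succ]; simp only [pqstep, ha, aq, xi, hP, hQ]
  have hpq2 : (pq m (k + 1)).2 = (m ^ 2 + 8 - (a * Q - P) ^ 2) / Q := by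
    rw [pq_succ]; simp only [pqstep, ha, aq, xi, hP, hQ]
  set P' : ℤ := a * Q - P with hP'
  have hdvd' : Q ∣ m ^ 2 + 8 - P' ^ 2 := by
    have he : m ^ 2 + 8 - P' ^ 2 = (m ^ 2 + 8 - P ^ 2) + Q * (2 * a * P - a ^ 2 * Q) := by
      rw [hP']; ring
    rw [he]; exact dvd_add hdvd ⟨_, rfl⟩
  set Q' : ℤ := (m ^ 2 + 8 - P' ^ 2) / Q with hQ'
  have hpq2' : (pq m (k + 1)).2 = Q' := hpq2
  have hQQ' : Q * Q' = m ^ 2 + 8 - P' ^ 2 := Int.mul_ediv_cancel' hdvd'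
  have ha1 : 1 ≤ a := by
    rw [ha, aq]; exact Int.le_floor.mpr (by exact_mod_cast hxi.le)
  have haR : (1 : ℝ) ≤ (a : ℝ) := by exact_mod_cast ha1
  have hxiQ : (Q : ℝ) * xi m k = (P : ℝ) + sq m := by
    rw [xi, ← hP, ← hQ]; field_simp
  -- fract is positive (xi is irrational)
  have hfr0 : 0 < Int.fract (xi m k) := by
    rw [Int.fract_pos]
    intro hcon
    have hs_eq : sq m = ((⌊xi m k⌋ * Q - P : ℤ) : ℝ) := by
      push_cast
      have : (Q : ℝ) * xi m k = (Q : ℝ) * (⌊xi m k⌋ : ℝ) := by rw [← hcon]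
      rw [hxiQ] at this
      linarith
    exact Int.not_irrational _ (hs_eq ▸ hirr)
  have hfr1 : Int.fract (xi m k) < 1 := Int.fract_lt_one _
  have hfract_eq : Int.fract (xi m k) = xi m k - (a : ℝ) := by
    rw [ha, aq]; exact (Int.self_sub_floor _).symm
  have hsP' : sq m - (P' : ℝ) = (Q : ℝ) * Int.fract (xi m k) := by
    rw [hfract_eq, mul_sub, hxiQ, hP']; push_cast; ring
  have hsubpos : 0 < sq m - (P' : ℝ) := by
    rw [hsP']; exact mul_pos hQR hfr0
  have hadd : (0 : ℝ) < sq m + (P' : ℝ) := by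
    rcases lt_trichotomy (sq m + (P' : ℝ)) 0 with hlt | heq | hgt
    · exfalso
      have hPs : (P : ℝ) - sq m = (Q : ℝ) * xc m k := by
        rw [xc, ← hP, ← hQ]; field_simp
      have hPlt : (P : ℝ) - sq m < 0 := by
        rw [hPs]; exact mul_neg_of_pos_of_neg hQR hc0
      have h2 : (Q : ℝ) ≤ (a : ℝ) * Q := by nlinarith
      push_cast [hP'] at hlt
      linarith
    · exfalso
      have : sq m = ((-P' : ℤ) : ℝ) := by push_cast; linarith
      exact Int.not_irrational _ (this ▸ hirr)
    · exact hgt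
  have hnum0 : ((Q : ℝ)) * (Q' : ℝ) = sq m ^ 2 - (P' : ℝ) ^ 2 := by
    rw [hss]; exact_mod_cast hQQ'
  have hQ'R : ((Q' : ℝ)) ≠ 0 := by
    intro hcon
    rw [hcon, mul_zero] at hnum0
    nlinarith
  have hQ'0 : Q' ≠ 0 := by exact_mod_cast hQ'R
  -- xi identity
  have hxi_eq : xi m (k + 1) = (Int.fract (xi m k))⁻¹ := by
    have hfr_ne : Int.fract (xi m k) ≠ 0 := ne_of_gt hfr0
    have hfeq : Int.fract (xi m k) = (sq m - (P' : ℝ)) / (Q : ℝ) := by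
      rw [hsP']; field_simp
    rw [xi, hpq1, hpq2', hfeq, inv_div]
    rw [div_eq_div_iff hQ'R (ne_of_gt hsubpos)]
    push_cast
    linear_combination -hnum0
  -- xc identity
  have hxc_eq2 : xc m (k + 1) = ((P' : ℝ) - sq m) / (Q' : ℝ) := by
    rw [xc, hpq1, hpq2']
  have hxck : xc m k - (a : ℝ) = (-(P' : ℝ) - sq m) / (Q : ℝ) := by
    rw [xc, ← hP, ← hQ]
    field_simp
    push_cast [hP']
    ring
  have hxc_ne : (-(P' : ℝ) - sq m) ≠ 0 := by intro hcon; nlinarith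
  have hxc_eq : xc m (k + 1) = (xc m k - (a : ℝ))⁻¹ := by
    rw [hxc_eq2, hxck, inv_div, div_eq_div_iff hQ'R hxc_ne]
    linear_combination -hnum0
  -- bounds for xc (k+1)
  have hwlt : xc m k - (a : ℝ) < -1 := by linarith
  set y : ℝ := -(xc m k - (a : ℝ)) with hy
  have hy1 : 1 < y := by rw [hy]; linarith
  have hinv_eq : (xc m k - (a : ℝ))⁻¹ = -y⁻¹ := by rw [hy, inv_neg, neg_neg]
  have hyinv0 : 0 < y⁻¹ := inv_pos.mpr (by linarith)
  have hyinv1 : y⁻¹ < 1 := by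
    rw [inv_lt_one_iff₀]; right; exact hy1
  have hc1' : -1 < xc m (k + 1) := by rw [hxc_eq, hinv_eq]; linarith
  have hc0' : xc m (k + 1) < 0 := by rw [hxc_eq, hinv_eq]; linarith
  -- Q' positive
  have hQ'pos : 0 < Q' := by
    have h1 : ((P' : ℝ) - sq m) / (Q' : ℝ) < 0 := by rw [← hxc_eq2]; exact hc0'
    by_contra hcon
    push_neg at hcon
    have h2 : (Q' : ℝ) < 0 := by
      rcases lt_or_eq_of_le hcon with h | h
      · exact_mod_cast h
      · exact absurd h hQ'0
    have h3 : (P' : ℝ) - sq m < 0 := by linarith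
    linarith [div_pos_of_neg_of_neg h3 h2]
  -- xi (k+1) > 1
  have hxi1 : 1 < xi m (k + 1) := by
    rw [hxi_eq]; exact (one_lt_inv₀ hfr0).mpr hfr1
  -- parity
  have hQ'eq : Q' = (m ^ 2 + 8 - P ^ 2) / Q + (2 * a * P - a ^ 2 * Q) := by
    rw [hQ', show m ^ 2 + 8 - P' ^ 2 = (m ^ 2 + 8 - P ^ 2) + Q * (2 * a * P - a ^ 2 * Q) by
      rw [hP']; ring, Int.add_mul_ediv_left _ _ (ne_of_gt qpos)]
  have hQ'even : Even Q' := by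
    rw [hQ'eq]
    exact heven.add (Even.sub ⟨a * P, by ring⟩ (qeven.mul_left (a ^ 2)))
  have hP'odd : Odd P' := by
    rw [hP']; exact (qeven.mul_left a).sub_odd podd
  have hprev : (m ^ 2 + 8 - (pq m (k + 1)).1 ^ 2) / (pq m (k + 1)).2 = Q := by
    rw [hpq1, hpq2', ← hQQ']
    exact Int.mul_ediv_cancel _ hQ'0
  refine ⟨⟨?_, ?_, ?_, ?_, ?_, hxi1, hc1', hc0'⟩, hxi_eq, hxc_eq, hprev⟩
  · rw [hpq1]; exact hP'odd
  · rw [hpq2']; exact hQ'even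
  · rw [hpq2']; exact hQ'pos
  · rw [hpq1, hpq2']
    exact ⟨Q, by rw [← hQQ']; ring⟩
  · rw [hprev]; exact qeven

lemma inv (m : ℤ) (hodd : Odd m) (hm : 3 ≤ m) : ∀ k, Inv m k
  | 0 => inv_zero m hodd hm
  | k + 1 => (inv_step m hm k (inv m hodd hm k)).1

lemma xi_succ (m : ℤ) (hodd : Odd m) (hm : 3 ≤ m) (k : ℕ) :
    xi m (k + 1) = (Int.fract (xi m k))⁻¹ :=
  (inv_step m hm k (inv m hodd hm k)).2.1

lemma xc_succ (m : ℤ) (hodd : Odd m) (hm : 3 ≤ m) (k : ℕ) :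
    xc m (k + 1) = (xc m k - (aq m k : ℝ))⁻¹ :=
  (inv_step m hm k (inv m hodd hm k)).2.2.1

lemma q_prev (m : ℤ) (hodd : Odd m) (hm : 3 ≤ m) (k : ℕ) :
    (m ^ 2 + 8 - (pq m (k + 1)).1 ^ 2) / (pq m (k + 1)).2 = (pq m k).2 :=
  (inv_step m hm k (inv m hodd hm k)).2.2.2

lemma aq_zero (m : ℤ) (hm : 3 ≤ m) : aq m 0 = m := by
  have hgt := s_gt m hm
  have hlt := s_lt m hm
  rw [aq]
  have h0 : xi m 0 = ((m : ℝ) + sq m) / 2 := by simp [xi, pq_zero]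
  rw [h0, Int.floor_eq_iff]
  constructor
  · linarith
  · push_cast; linarith

lemma pq_one (m : ℤ) (hm : 3 ≤ m) : pq m 1 = (m, 4) := by
  have h1 : (pq m 1).1 = aq m 0 * (pq m 0).2 - (pq m 0).1 := by
    rw [pq_succ]; simp only [pqstep, aq, xi]
  have h2 : (pq m 1).2 = (m ^ 2 + 8 - (aq m 0 * (pq m 0).2 - (pq m 0).1) ^ 2) / (pq m 0).2 := by
    rw [pq_succ]; simp only [pqstep, aq, xi]
  rw [pq_zero] at h1 h2
  simp only [aq_zero m hm] at h1 h2
  have e1 : (pq m 1).1 = m := by rw [h1]; ring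
  have e2 : (pq m 1).2 = 4 := by
    rw [h2]
    have : m * 2 - m = m := by ring
    rw [this]
    have : m ^ 2 + 8 - m ^ 2 = 8 := by ring
    rw [this]; decide
  exact Prod.ext e1 e2

-- eta facts
lemma eta_eq (m : ℤ) (hodd : Odd m) (hm : 3 ≤ m) (k : ℕ) : eta m k = -(xc m k)⁻¹ := by
  have h := inv m hodd hm k
  have hq : (0:ℝ) < ((pq m k).2 : ℝ) := by exact_mod_cast h.qpos
  have hsP : ((pq m k).1 : ℝ) - sq m < 0 := by
    have h0 := h.hc0
    rw [xc, div_neg_iff] at h0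
    rcases h0 with ⟨-, h2⟩ | ⟨h1, -⟩
    · linarith
    · exact h1
  rw [eta, xc, inv_div, show sq m - ((pq m k).1 : ℝ) = -(((pq m k).1 : ℝ) - sq m) by ring,
    div_neg]

lemma eta_floor (m : ℤ) (hodd : Odd m) (hm : 3 ≤ m) (k : ℕ) :
    ⌊eta m (k + 1)⌋ = aq m k := by
  have h := inv m hodd hm k
  have heq : eta m (k + 1) = (aq m k : ℝ) - xc m k := by
    rw [eta_eq m hodd hm (k + 1), xc_succ m hodd hm k, inv_inv]; ring
  rw [heq, Int.floor_eq_iff]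
  constructor
  · linarith [h.hc0]
  · push_cast; linarith [h.hc1]

lemma eta_fract (m : ℤ) (hodd : Odd m) (hm : 3 ≤ m) (k : ℕ) :
    (Int.fract (eta m (k + 1)))⁻¹ = eta m k := by
  have h := inv m hodd hm k
  have heq : eta m (k + 1) = (aq m k : ℝ) - xc m k := by
    rw [eta_eq m hodd hm (k + 1), xc_succ m hodd hm k, inv_inv]; ring
  have hfr : Int.fract (eta m (k + 1)) = -(xc m k) := by
    rw [← Int.self_sub_floor, eta_floor m hodd hm k, heq]; ring
  rw [hfr, eta_eq m hodd hm k, ← inv_neg]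

-- cq / cfA bridges
lemma cq_shift (α : ℝ) : ∀ n : ℕ, cq α (n + 1) = cq (Int.fract α)⁻¹ n
  | 0 => by simp [cq]
  | n + 1 => by
      rw [show cq α (n + 1 + 1) = (Int.fract (cq α (n + 1)))⁻¹ from rfl, cq_shift α n]
      rfl

lemma cfA_floor : ∀ (n : ℕ) (α : ℝ), cfA α n = ⌊cq α n⌋
  | 0, α => rfl
  | n + 1, α => by
      rw [show cfA α (n + 1) = cfA (Int.fract α)⁻¹ n from rfl, cfA_floor n _, cq_shift]

lemma p_lt_s (m : ℤ) (hodd : Odd m) (hm : 3 ≤ m) (k : ℕ) : ((pq m k).1 : ℝ) < sq m := by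
  have h := inv m hodd hm k
  have h0 := h.hc0
  rw [xc, div_neg_iff] at h0
  have hq : (0:ℝ) < ((pq m k).2 : ℝ) := by exact_mod_cast h.qpos
  rcases h0 with ⟨-, h2⟩ | ⟨h1, -⟩
  · linarith
  · linarith

lemma pq_bounded (m : ℤ) (hodd : Odd m) (hm : 3 ≤ m) (k : ℕ) :
    pq m k ∈ Set.Icc ((1 : ℤ), (1 : ℤ)) (m + 1, 2 * m + 4) := by
  have h := inv m hodd hm k
  have hq : (0:ℝ) < ((pq m k).2 : ℝ) := by exact_mod_cast h.qpos
  have hgt := s_gt m hm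
  have hlt := s_lt m hm
  have hPlt := p_lt_s m hodd hm k
  have hsum : xi m k + xc m k = 2 * ((pq m k).1 : ℝ) / ((pq m k).2 : ℝ) := by
    rw [xi, xc]; field_simp; ring
  have hsumpos : 0 < 2 * ((pq m k).1 : ℝ) / ((pq m k).2 : ℝ) := by
    rw [← hsum]; linarith [h.hxi, h.hc1]
  have hPpos : 0 < (pq m k).1 := by
    rcases div_pos_iff.mp hsumpos with ⟨h1, -⟩ | ⟨-, h2⟩
    · have : (0:ℝ) < ((pq m k).1 : ℝ) := by linarith
      exact_mod_cast this
    · linarith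
  have hPle : (pq m k).1 ≤ m + 1 := by
    have : ((pq m k).1 : ℝ) < (m : ℝ) + 2 := by linarith
    have : (pq m k).1 < m + 2 := by exact_mod_cast this
    omega
  have hQle : (pq m k).2 ≤ 2 * m + 4 := by
    have h1 := h.hxi
    rw [xi, lt_div_iff₀ hq, one_mul] at h1
    have : ((pq m k).2 : ℝ) < 2 * (m : ℝ) + 4 := by linarith
    have : (pq m k).2 < 2 * m + 4 := by exact_mod_cast this
    omega
  simp only [Set.mem_Icc, Prod.le_def]
  exact ⟨⟨hPpos, h.qpos⟩, ⟨hPle, hQle⟩⟩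

lemma pq_back (m : ℤ) (hodd : Odd m) (hm : 3 ≤ m) (i j : ℕ)
    (h : pq m (i + 1) = pq m (j + 1)) : pq m i = pq m j := by
  have hQ2 : (pq m i).2 = (pq m j).2 := by
    rw [← q_prev m hodd hm i, ← q_prev m hodd hm j, h]
  have heta : eta m (i + 1) = eta m (j + 1) := by rw [eta, eta, h]
  have haq : aq m i = aq m j := by
    rw [← eta_floor m hodd hm i, ← eta_floor m hodd hm j, heta]
  have e1 : (pq m (i + 1)).1 = aq m i * (pq m i).2 - (pq m i).1 := by
    rw [pq_succ]; simp only [pqstep, aq, xi]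
  have e2 : (pq m (j + 1)).1 = aq m j * (pq m j).2 - (pq m j).1 := by
    rw [pq_succ]; simp only [pqstep, aq, xi]
  have h1 : (pq m (i + 1)).1 = (pq m (j + 1)).1 := by rw [h]
  rw [haq, hQ2] at e1
  have hP1 : (pq m i).1 = (pq m j).1 := by rw [e1, e2] at h1; omega
  exact Prod.ext hP1 hQ2

lemma pq_ret (m : ℤ) (hodd : Odd m) (hm : 3 ≤ m) :
    ∀ i d, pq m i = pq m (i + d) → pq m 0 = pq m d
  | 0, d, h => by rw [h]; congr 1; omega
  | i + 1, d, h =>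
      pq_ret m hodd hm i d
        (pq_back m hodd hm i (i + d) (by rw [h]; congr 1; omega))

lemma exists_ret (m : ℤ) (hodd : Odd m) (hm : 3 ≤ m) :
    ∃ t, 0 < t ∧ pq m t = pq m 0 := by
  have hfin : (Set.Icc ((1 : ℤ), (1 : ℤ)) (m + 1, 2 * m + 4)).Finite := Set.finite_Icc _ _
  obtain ⟨i, -, j, -, hij, heq⟩ :=
    (Set.infinite_univ (α := ℕ)).exists_ne_map_eq_of_mapsTo
      (f := pq m) (fun k _ => pq_bounded m hodd hm k) hfin
  rcases Nat.lt_or_ge i j with hlt | hge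
  · refine ⟨j - i, by omega, ?_⟩
    exact (pq_ret m hodd hm i (j - i) (by rw [heq]; congr 1; omega)).symm
  · have hlt : j < i := by omega
    refine ⟨i - j, by omega, ?_⟩
    exact (pq_ret m hodd hm j (i - j) (by rw [← heq]; congr 1; omega)).symm

lemma pq_add (m : ℤ) (T : ℕ) (hT : pq m T = pq m 0) : ∀ k, pq m (k + T) = pq m k
  | 0 => by simpa using hT
  | k + 1 => by
      rw [show k + 1 + T = (k + T) + 1 by omega, pq_succ, pq_succ, pq_add m T hT k]

lemma cq_eq_xi (m : ℤ) (hodd : Odd m) (hm : 3 ≤ m) (α : ℝ)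
    (hα : α = ((m : ℝ) + Real.sqrt ((m : ℝ) ^ 2 + 8)) / 2) : ∀ k, cq α k = xi m k
  | 0 => by
      rw [show cq α 0 = α from rfl, hα]
      show _ = (((pq m 0).1 : ℝ) + sq m) / ((pq m 0).2 : ℝ)
      rw [pq_zero, sq]
      norm_num
  | k + 1 => by
      rw [show cq α (k + 1) = (Int.fract (cq α k))⁻¹ from rfl,
        cq_eq_xi m hodd hm α hα k, ← xi_succ m hodd hm k]

lemma cfA_eq_aq (m : ℤ) (hodd : Odd m) (hm : 3 ≤ m) (α : ℝ)
    (hα : α = ((m : ℝ) + Real.sqrt ((m : ℝ) ^ 2 + 8)) / 2) (k : ℕ) :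
    cfA α k = aq m k := by
  rw [cfA_floor, cq_eq_xi m hodd hm α hα k, aq]

lemma cfA_eta (m : ℤ) (hodd : Odd m) (hm : 3 ≤ m) :
    ∀ (j k : ℕ), j ≤ k → cfA (eta m (k + 1)) j = aq m (k - j)
  | 0, k, _ => by
      rw [show cfA (eta m (k + 1)) 0 = ⌊eta m (k + 1)⌋ from rfl, eta_floor m hodd hm k]
      simp
  | j + 1, k, hjk => by
      obtain ⟨k', rfl⟩ : ∃ k', k = k' + 1 := ⟨k - 1, by omega⟩
      rw [show cfA (eta m (k' + 1 + 1)) (j + 1) = cfA (Int.fract (eta m (k' + 1 + 1)))⁻¹ j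
          from rfl,
        eta_fract m hodd hm (k' + 1), cfA_eta m hodd hm j k' (by omega)]
      congr 1
      omega

lemma xi_one_eq_eta_zero (m : ℤ) (hm : 3 ≤ m) : xi m 1 = eta m 0 := by
  have hgt := s_gt m hm
  have hm' : (3 : ℝ) ≤ (m : ℝ) := by exact_mod_cast hm
  have hss := s_sq m
  rw [xi, eta, pq_one m hm, pq_zero]
  show ((m : ℝ) + sq m) / (4 : ℤ) = ((2 : ℤ) : ℝ) / (sq m - (m : ℝ))
  push_cast
  rw [div_eq_div_iff (by norm_num) (by linarith)]
  linear_combination hss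

lemma cfA_succ_eq (m : ℤ) (hodd : Odd m) (hm : 3 ≤ m) (α : ℝ)
    (hα : α = ((m : ℝ) + Real.sqrt ((m : ℝ) ^ 2 + 8)) / 2) (j : ℕ) :
    cfA α (j + 1) = cfA (xi m 1) j := by
  rw [show cfA α (j + 1) = cfA (Int.fract α)⁻¹ j from rfl]
  congr 1
  have h1 : cq α 1 = xi m 1 := cq_eq_xi m hodd hm α hα 1
  rw [show cq α 1 = (Int.fract (cq α 0))⁻¹ from rfl, show cq α 0 = α from rfl] at h1
  exact h1

end Stmt12Aux

/-- For odd `m ≥ 3` and `α = (m + √(m² + 8))/2` the positive root of `x² - mx - 2`, the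
continued fraction expansion of `α` is purely periodic of the shape `[\overline{m; a_1, …, a_n}]`,
where `a_1 ⋯ a_n` is a palindrome and `a_i ≤ m` for `1 ≤ i ≤ n`. -/

theorem stmt12 (m : ℤ) (hodd : Odd m) (hm : 3 ≤ m) (α : ℝ)
    (hα : α = ((m : ℝ) + Real.sqrt ((m : ℝ) ^ 2 + 8)) / 2) :
    ∃ n : ℕ, 1 ≤ n ∧
      (∀ k : ℕ, cfA α (k + (n + 1)) = cfA α k) ∧
      cfA α 0 = m ∧
      (∀ i, 1 ≤ i → i ≤ n → cfA α i = cfA α (n + 1 - i)) ∧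
      (∀ i, 1 ≤ i → i ≤ n → cfA α i ≤ m) := by
  classical
  have hex := Stmt12Aux.exists_ret m hodd hm
  obtain ⟨hTpos, hTeq⟩ := Nat.find_spec hex
  set T := Nat.find hex with hTdef
  have hmin : ∀ t, 0 < t → t < T → Stmt12Aux.pq m t ≠ Stmt12Aux.pq m 0 := by
    intro t ht hlt hne
    exact Nat.find_min hex hlt ⟨ht, hne⟩
  have hT1 : T ≠ 1 := by
    intro h1
    rw [h1, Stmt12Aux.pq_one m hm, Stmt12Aux.pq_zero] at hTeq
    simp [Prod.ext_iff] at hTeq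
  have hT2 : 2 ≤ T := by omega
  have pqadd := Stmt12Aux.pq_add m T hTeq
  refine ⟨T - 1, by omega, ?_, ?_, ?_, ?_⟩
  · intro k
    rw [Stmt12Aux.cfA_eq_aq m hodd hm α hα, Stmt12Aux.cfA_eq_aq m hodd hm α hα,
      show k + (T - 1 + 1) = k + T by omega]
    simp only [Stmt12Aux.aq, Stmt12Aux.xi, pqadd k]
  · rw [Stmt12Aux.cfA_eq_aq m hodd hm α hα]
    exact Stmt12Aux.aq_zero m hm
  · intro i h1 hi
    have e1 : cfA α i = Stmt12Aux.aq m (T - i) := by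
      rw [show i = (i - 1) + 1 by omega, Stmt12Aux.cfA_succ_eq m hodd hm α hα (i - 1),
        Stmt12Aux.xi_one_eq_eta_zero m hm]
      have heta : Stmt12Aux.eta m 0 = Stmt12Aux.eta m T := by
        rw [Stmt12Aux.eta, Stmt12Aux.eta, hTeq]
      rw [heta, show T = (T - 1) + 1 by omega,
        Stmt12Aux.cfA_eta m hodd hm (i - 1) (T - 1) (by omega)]
      congr 1
      omega
    rw [e1, Stmt12Aux.cfA_eq_aq m hodd hm α hα]
    congr 1
    omega
  · intro i h1 hi
    rw [Stmt12Aux.cfA_eq_aq m hodd hm α hα i]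
    have hne : Stmt12Aux.pq m i ≠ Stmt12Aux.pq m 0 := hmin i (by omega) (by omega)
    have h := Stmt12Aux.inv m hodd hm i
    have hgt := Stmt12Aux.s_gt m hm
    have hlt := Stmt12Aux.s_lt m hm
    have hPlt := Stmt12Aux.p_lt_s m hodd hm i
    have hQ4 : 4 ≤ (Stmt12Aux.pq m i).2 := by
      obtain ⟨c, hc⟩ := h.qeven
      have hqpos := h.qpos
      have h2 : (Stmt12Aux.pq m i).2 ≠ 2 := by
        intro hq2
        have hc1 := h.hc1
        rw [Stmt12Aux.xc, hq2] at hc1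
        have hP1 : (m : ℝ) - 2 < ((Stmt12Aux.pq m i).1 : ℝ) := by
          push_cast at hc1
          linarith
        have hP2 : ((Stmt12Aux.pq m i).1 : ℝ) < (m : ℝ) + 2 := by linarith
        have hi1 : m - 2 < (Stmt12Aux.pq m i).1 := by exact_mod_cast hP1
        have hi2 : (Stmt12Aux.pq m i).1 < m + 2 := by exact_mod_cast hP2
        obtain ⟨u, hu⟩ := h.podd
        obtain ⟨v, hv⟩ := hodd
        have hPm : (Stmt12Aux.pq m i).1 = m := by omega
        exact hne (by rw [Stmt12Aux.pq_zero]; exact Prod.ext hPm hq2)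
      omega
    have hq : (4 : ℝ) ≤ ((Stmt12Aux.pq m i).2 : ℝ) := by exact_mod_cast hQ4
    have hfl : ((Stmt12Aux.aq m i : ℤ) : ℝ) ≤ Stmt12Aux.xi m i := Int.floor_le _
    have hm' : (3 : ℝ) ≤ (m : ℝ) := by exact_mod_cast hm
    have hxib : Stmt12Aux.xi m i < (m : ℝ) := by
      rw [Stmt12Aux.xi, div_lt_iff₀ (by linarith)]
      nlinarith
    have hcast : ((Stmt12Aux.aq m i : ℤ) : ℝ) < (m : ℝ) := lt_of_le_of_lt hfl hxib
    have : Stmt12Aux.aq m i < m := by exact_mod_cast hcast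
    omega
end

section
/- If a real irrational α is equivalent to [0; \overline{1}] = (√5 − 1)/2, then 2α is equivalent to [0; \overline{4}] = √5 − 2. -/
open Filter

/-- Denominator of an integer Möbius map at an irrational is nonzero. -/
lemma aux_denom_ne (α : ℝ) (hα : Irrational α) (c d : ℤ) (h : ¬(c = 0 ∧ d = 0)) :
    (c : ℝ) * α + d ≠ 0 := by
  rcases eq_or_ne c 0 with hc | hc
  · subst hc
    have hd : d ≠ 0 := fun hd => h ⟨rfl, hd⟩
    simpa using (by exact_mod_cast hd : (d : ℝ) ≠ 0)
  · intro h0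
    have : α = ((-d / c : ℚ) : ℝ) := by
      have hc' : (c : ℝ) ≠ 0 := by exact_mod_cast hc
      push_cast
      field_simp
      linarith
    exact hα ⟨-d / c, this.symm⟩

/-- One step: replace (a,b;c,d) by (c,d;a+c,b+d), using φ = 1/(1+φ). -/
lemma aux_step (α : ℝ) (a b c d : ℤ)
    (hcd : (c : ℝ) * α + d ≠ 0)
    (heq : (Real.sqrt 5 - 1) / 2 = ((a : ℝ) * α + b) / ((c : ℝ) * α + d)) :
    (((a + c : ℤ) : ℝ) * α + ((b + d : ℤ) : ℝ) ≠ 0) ∧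
    (Real.sqrt 5 - 1) / 2 = ((c : ℝ) * α + d) / (((a + c : ℤ) : ℝ) * α + ((b + d : ℤ) : ℝ)) := by
  set s := Real.sqrt 5 with hs_def
  have hs : s * s = 5 := Real.mul_self_sqrt (by norm_num)
  have hspos : 0 < s := Real.sqrt_pos.mpr (by norm_num)
  set D : ℝ := (c : ℝ) * α + d with hD
  set N : ℝ := (a : ℝ) * α + b with hN
  have hNφ : N = (s - 1) / 2 * D := by
    field_simp at heq
    linear_combination (-1/2 : ℝ) * heq
  have hD' : ((a + c : ℤ) : ℝ) * α + ((b + d : ℤ) : ℝ) = (s + 1) / 2 * D := by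
    push_cast
    have : ((a : ℝ) + c) * α + ((b : ℝ) + d) = N + D := by rw [hN, hD]; ring
    rw [this, hNφ]; ring
  have hpos : (s + 1) / 2 ≠ 0 := by positivity
  constructor
  · rw [hD']; exact mul_ne_zero hpos hcd
  · rw [hD']
    rw [eq_div_iff (mul_ne_zero hpos hcd)]
    have : (s - 1) / 2 * ((s + 1) / 2 * D) = ((s * s - 1) / 4) * D := by ring
    rw [this, hs]
    norm_num

/-- Final step: lower-left entry even gives the result. -/
lemma aux_fin (α : ℝ) (a b e d : ℤ)
    (hcd : ((2 * e : ℤ) : ℝ) * α + d ≠ 0)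
    (hdet : a * d - b * (2 * e) = 1 ∨ a * d - b * (2 * e) = -1)
    (heq : (Real.sqrt 5 - 1) / 2 = ((a : ℝ) * α + b) / (((2 * e : ℤ) : ℝ) * α + d)) :
    ∃ a' b' c' d' : ℤ, (a' * d' - b' * c' = 1 ∨ a' * d' - b' * c' = -1) ∧
      Real.sqrt 5 - 2 = ((a' : ℝ) * (2 * α) + b') / ((c' : ℝ) * (2 * α) + d') := by
  refine ⟨a - e, 2 * b - d, e, d, ?_, ?_⟩
  · rcases hdet with h1 | h1
    · left; linear_combination h1
    · right; linear_combination h1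
  · have hD : ((e : ℝ)) * (2 * α) + d = ((2 * e : ℤ) : ℝ) * α + d := by push_cast; ring
    set s := Real.sqrt 5
    have heq' : ((s - 1) / 2) * (((2 * e : ℤ) : ℝ) * α + d) = (a : ℝ) * α + b := by
      rw [heq]; exact div_mul_cancel₀ _ hcd
    rw [eq_div_iff (by rw [hD]; exact hcd)]
    push_cast at heq' ⊢
    linear_combination 2 * heq'

/-- If an irrational `α` is equivalent to `[0; \overline{1}] = (√5 - 1)/2`, then `2α` is
equivalent to `[0; \overline{4}] = √5 - 2`. -/
theorem stmt14 (α : ℝ) (hα : Irrational α)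
    (h : CfEquiv α ((Real.sqrt 5 - 1) / 2)) :
    CfEquiv (2 * α) (Real.sqrt 5 - 2) := by
  obtain ⟨a, b, c, d, hdet, heq⟩ := h
  have hcd : (c : ℝ) * α + d ≠ 0 := by
    apply aux_denom_ne α hα
    rintro ⟨rfl, rfl⟩
    simp at hdet
  have det1 : c * (b + d) - d * (a + c) = 1 ∨ c * (b + d) - d * (a + c) = -1 := by
    rcases hdet with h1 | h1
    · right; linear_combination (-1 : ℤ) * h1
    · left; linear_combination (-1 : ℤ) * h1
  obtain ⟨hcd1, heq1⟩ := aux_step α a b c d hcd heq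
  have det2 : (a + c) * (d + (b + d)) - (b + d) * (c + (a + c)) = 1 ∨
      (a + c) * (d + (b + d)) - (b + d) * (c + (a + c)) = -1 := by
    rcases hdet with h1 | h1
    · left; linear_combination h1
    · right; linear_combination h1
  obtain ⟨hcd2, heq2⟩ := aux_step α c d (a + c) (b + d) hcd1 heq1
  rcases Int.even_or_odd c with ⟨e, he⟩ | hodd
  · refine aux_fin α a b e d ?_ ?_ ?_
    · rw [show (2 * e : ℤ) = c by omega]; exact hcd
    · rw [show (2 * e : ℤ) = c by omega]; exact hdet
    · rw [show (2 * e : ℤ) = c by omega]; exact heq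
  · rcases Int.even_or_odd a with ⟨e0, he0⟩ | hodda
    · -- a even, c odd: two steps, lower-left c + (a + c) = a + 2c even
      obtain ⟨e, he2⟩ : Even (c + (a + c)) := ⟨e0 + c, by omega⟩
      refine aux_fin α (a + c) (b + d) e (d + (b + d)) ?_ ?_ ?_
      · rw [show (2 * e : ℤ) = c + (a + c) by omega]
        convert hcd2 using 3 <;> push_cast <;> ring
      · rw [show (2 * e : ℤ) = c + (a + c) by omega]; exact det2
      · rw [show (2 * e : ℤ) = c + (a + c) by omega]
        convert heq2 using 3 <;> push_cast <;> ring
    · -- a odd, c odd: one step, lower-left a + c even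
      obtain ⟨k, hk⟩ := hodd
      obtain ⟨j, hj⟩ := hodda
      obtain ⟨e, he2⟩ : Even (a + c) := ⟨j + k + 1, by omega⟩
      refine aux_fin α c d e (b + d) ?_ ?_ ?_
      · rw [show (2 * e : ℤ) = a + c by omega]; exact hcd1
      · rw [show (2 * e : ℤ) = a + c by omega]; exact det1
      · rw [show (2 * e : ℤ) = a + c by omega]; exact heq1
end
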